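/- arXiv:2211.14101 — 4 statements merged into one kernel-verified Lean document; each statement's English description precedes it below -/
import Mathlib

section
/- Let r ≥ 1 and let A be a non-empty subset of {0,1,…,r}. For integers q, i with 1 ≤ q ≤ r and 0 ≤ i ≤ r − q, let f(q,i,A) = Σ_{b ∈ A(i)} C(q,b) where A(i) = {a − i : a ∈ A, a ≥ i}. Let the maximum of f(q,i,A)^{1/q} over all such pairs (q,i) be attained at q = p and i = i₀. Then there exists a constant C > 0 (depending only on r and A) such that for all n ≥ r, the maximum number of A-transversals over all r-uniform hypergraphs on n vertices with no isolated vertices is at most C · f(p,i₀,A)^{n/p}. -/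
/-- `f q i A = Σ_{b ∈ A(i)} C(q,b)`, where `A(i) = {a - i : a ∈ A, a ≥ i}`. -/
def f (q i : ℕ) (A : Finset ℕ) : ℕ :=
  ∑ a ∈ A.filter (fun a => i ≤ a), q.choose (a - i)

namespace TransversalAux

open Finset

variable {n : ℕ}

/-- Union of the blocks of a chain. -/
def chainU (L : List (Finset (Fin n) × Finset (Fin n))) : Finset (Fin n) :=
  L.foldr (fun pb acc => pb.2 ∪ acc) ∅

/-- A chain of (edge, block) pairs: each block is a nonempty subset of its edge,
disjoint from the union of the previous blocks, and the edge is contained in the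
union of the blocks so far (most recent first). -/
inductive TChain (E : Finset (Finset (Fin n))) :
    List (Finset (Fin n) × Finset (Fin n)) → Prop
  | nil : TChain E []
  | cons {H B : Finset (Fin n)} {L} (hH : H ∈ E) (hBH : B ⊆ H) (hBne : B.Nonempty)
      (hdisj : Disjoint B (chainU L)) (hHsub : H ⊆ B ∪ chainU L)
      (hL : TChain E L) : TChain E ((H, B) :: L)

lemma chainU_cons (pb : Finset (Fin n) × Finset (Fin n))
    (L : List (Finset (Fin n) × Finset (Fin n))) :
    chainU (pb :: L) = pb.2 ∪ chainU L := rfl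

lemma edge_subset {E : Finset (Finset (Fin n))} {L} (h : TChain E L) :
    ∀ pb ∈ L, pb.1 ⊆ chainU L := by
  induction h with
  | nil => intro pb hpb; simp at hpb
  | @cons H B L hH hBH hBne hdisj hHsub hL ih =>
    intro pb hpb
    rcases List.mem_cons.mp hpb with h1 | h2
    · subst h1; simpa [chainU_cons] using hHsub
    · exact (ih pb h2).trans (by rw [chainU_cons]; exact subset_union_right)

lemma edge_mem {E : Finset (Finset (Fin n))} {L} (h : TChain E L) :
    ∀ pb ∈ L, pb.1 ∈ E := by
  induction h with
  | nil => intro pb hpb; simp at hpb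
  | cons hH _ _ _ _ _ ih =>
    intro pb hpb
    rcases List.mem_cons.mp hpb with h1 | h2
    · subst h1; exact hH
    · exact ih pb h2

/-- The number of subsets of the union of the blocks respecting all chain constraints. -/
def cnt (A : Finset ℕ) (L : List (Finset (Fin n) × Finset (Fin n))) : ℕ :=
  ((chainU L).powerset.filter (fun X => ∀ pb ∈ L, (pb.1 ∩ X).card ∈ A)).card

lemma exists_chain {E : Finset (Finset (Fin n))}
    (hcov : ∀ v : Fin n, ∃ H ∈ E, v ∈ H) :
    ∃ L, TChain E L ∧ chainU L = Finset.univ := by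
  suffices h : ∀ m (L : List (Finset (Fin n) × Finset (Fin n))), TChain E L →
      n ≤ (chainU L).card + m → ∃ L', TChain E L' ∧ chainU L' = Finset.univ by
    exact h n [] TChain.nil (by simp)
  intro m
  induction m with
  | zero =>
    intro L hL hle
    refine ⟨L, hL, ?_⟩
    apply Finset.eq_univ_of_card
    have h1 := Finset.card_le_univ (chainU L)
    simp only [Finset.card_univ, Fintype.card_fin] at h1 ⊢
    omega
  | succ m ih =>
    intro L hL hle
    by_cases hfull : chainU L = Finset.univ
    · exact ⟨L, hL, hfull⟩
    · obtain ⟨v, hv⟩ : ∃ v, v ∉ chainU L := by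
        by_contra hcon
        push_neg at hcon
        exact hfull (Finset.eq_univ_iff_forall.mpr hcon)
      obtain ⟨H, hHE, hvH⟩ := hcov v
      have hBne : (H \ chainU L).Nonempty := ⟨v, Finset.mem_sdiff.mpr ⟨hvH, hv⟩⟩
      have hch : TChain E ((H, H \ chainU L) :: L) :=
        TChain.cons hHE Finset.sdiff_subset hBne Finset.sdiff_disjoint
          (by rw [Finset.sdiff_union_self_eq_union]; exact Finset.subset_union_left) hL
      apply ih _ hch
      have hcu : (chainU ((H, H \ chainU L) :: L)).card
          = (H \ chainU L).card + (chainU L).card := by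
        rw [chainU_cons]; exact Finset.card_union_of_disjoint Finset.sdiff_disjoint
      have hb1 : 1 ≤ (H \ chainU L).card := Finset.card_pos.mpr hBne
      omega

lemma cnt_le {r p : ℕ} {A : Finset ℕ} {F : ℝ}
    (hF1 : 1 ≤ F)
    (hkey : ∀ q i : ℕ, 1 ≤ q → q ≤ r → i ≤ r - q → (f q i A : ℝ) ≤ F ^ ((q : ℝ) / p))
    {E : Finset (Finset (Fin n))} (hE : ∀ H ∈ E, H.card = r)
    {L} (h : TChain E L) :
    (cnt A L : ℝ) ≤ F ^ (((chainU L).card : ℝ) / p) := by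
  have hF0 : (0 : ℝ) < F := lt_of_lt_of_le one_pos hF1
  induction h with
  | nil =>
    have h1 : cnt A ([] : List (Finset (Fin n) × Finset (Fin n))) = 1 := by
      simp [cnt, chainU]
    rw [h1]
    have h2 : ((chainU ([] : List (Finset (Fin n) × Finset (Fin n)))).card : ℝ) / p = 0 := by
      simp [chainU]
    rw [h2, Real.rpow_zero]
    norm_num
  | @cons H B L hH hBH hBne hdisj hHsub hL ih =>
    set U' := chainU L with hU'
    set q := B.card with hq
    have hHcard : H.card = r := hE H hH
    have hq1 : 1 ≤ q := Finset.card_pos.mpr hBne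
    have hqr : q ≤ r := hHcard ▸ Finset.card_le_card hBH
    set S' := U'.powerset.filter (fun X => ∀ pb ∈ L, (pb.1 ∩ X).card ∈ A) with hS'
    -- the constrained subsets inject into a biUnion over S'
    have hsub : ((chainU ((H, B) :: L)).powerset.filter
        (fun X => ∀ pb ∈ (H, B) :: L, (pb.1 ∩ X).card ∈ A)) ⊆
        S'.biUnion (fun X' => (B.powerset.filter
          (fun Y => (H ∩ X').card + Y.card ∈ A)).image (fun Y => X' ∪ Y)) := by
      intro X hX
      rw [mem_filter, mem_powerset, chainU_cons] at hX
      obtain ⟨hXsub, hXcond⟩ := hX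
      have hXU : X ∩ U' ∈ S' := by
        rw [hS', mem_filter, mem_powerset]
        refine ⟨inter_subset_right, ?_⟩
        intro pb hpb
        have hpbU : pb.1 ⊆ U' := edge_subset hL pb hpb
        have heq : pb.1 ∩ (X ∩ U') = pb.1 ∩ X := by
          ext x
          simp only [mem_inter]
          constructor
          · rintro ⟨h1, h2, _⟩; exact ⟨h1, h2⟩
          · rintro ⟨h1, h2⟩; exact ⟨h1, h2, hpbU h1⟩
        rw [heq]
        exact hXcond pb (List.mem_cons_of_mem _ hpb)
      rw [mem_biUnion]
      refine ⟨X ∩ U', hXU, ?_⟩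
      rw [mem_image]
      refine ⟨X ∩ B, ?_, ?_⟩
      · rw [mem_filter, mem_powerset]
        refine ⟨inter_subset_right, ?_⟩
        have hdecomp : H ∩ X = (H ∩ (X ∩ U')) ∪ (X ∩ B) := by
          ext x
          simp only [mem_inter, mem_union]
          constructor
          · rintro ⟨hxH, hxX⟩
            rcases mem_union.mp (hXsub hxX) with hB | hU
            · exact Or.inr ⟨hxX, hB⟩
            · exact Or.inl ⟨hxH, hxX, hU⟩
          · rintro (⟨h1, h2, _⟩ | ⟨h1, h2⟩)
            · exact ⟨h1, h2⟩
            · exact ⟨hBH h2, h1⟩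
        have hdis : Disjoint (H ∩ (X ∩ U')) (X ∩ B) := by
          rw [Finset.disjoint_left]
          intro x hx hx2
          have hxU : x ∈ U' := (mem_inter.mp (mem_inter.mp hx).2).2
          have hxB : x ∈ B := (mem_inter.mp hx2).2
          exact (Finset.disjoint_left.mp hdisj) hxB hxU
        have hcond := hXcond (H, B) List.mem_cons_self
        simp only at hcond
        rw [hdecomp, Finset.card_union_of_disjoint hdis] at hcond
        exact hcond
      · ext x
        simp only [mem_union, mem_inter]
        constructor
        · rintro (⟨h1, _⟩ | ⟨h1, _⟩) <;> exact h1
        · intro hx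
          rcases mem_union.mp (hXsub hx) with hB | hU
          · exact Or.inr ⟨hx, hB⟩
          · exact Or.inl ⟨hx, hU⟩
    -- each fiber has size at most f q i A ≤ F ^ (q/p)
    have hcard_bound : ∀ X' ∈ S',
        ((B.powerset.filter (fun Y => (H ∩ X').card + Y.card ∈ A)).card : ℝ)
          ≤ F ^ ((q : ℝ) / p) := by
      intro X' hX'
      set i := (H ∩ X').card with hi
      have hiUB : i ≤ r - q := by
        have h1 : H ∩ X' ⊆ H \ B := by
          intro x hx
          rw [mem_sdiff]
          have hxH := (mem_inter.mp hx).1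
          have hxX' := (mem_inter.mp hx).2
          have hxU' : x ∈ U' := (mem_powerset.mp (mem_filter.mp hX').1) hxX'
          exact ⟨hxH, fun hxB => (Finset.disjoint_left.mp hdisj) hxB hxU'⟩
        have h2 : (H \ B).card = r - q := by
          rw [card_sdiff_of_subset hBH, hHcard]
        calc i ≤ (H \ B).card := card_le_card h1
          _ = r - q := h2
      have hcnt : (B.powerset.filter (fun Y => i + Y.card ∈ A)).card ≤ f q i A := by
        have hsub2 : B.powerset.filter (fun Y => i + Y.card ∈ A) ⊆
            (A.filter (fun a => i ≤ a)).biUnion (fun a => B.powersetCard (a - i)) := by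
          intro Y hY
          rw [mem_filter, mem_powerset] at hY
          rw [mem_biUnion]
          refine ⟨i + Y.card, mem_filter.mpr ⟨hY.2, Nat.le_add_right _ _⟩, ?_⟩
          rw [mem_powersetCard]
          exact ⟨hY.1, by omega⟩
        calc (B.powerset.filter (fun Y => i + Y.card ∈ A)).card
            ≤ ((A.filter (fun a => i ≤ a)).biUnion (fun a => B.powersetCard (a - i))).card :=
              card_le_card hsub2
          _ ≤ ∑ a ∈ A.filter (fun a => i ≤ a), (B.powersetCard (a - i)).card :=
              card_biUnion_le
          _ = f q i A := by
              unfold f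
              refine Finset.sum_congr rfl ?_
              intro a _
              rw [card_powersetCard]
      calc ((B.powerset.filter (fun Y => i + Y.card ∈ A)).card : ℝ)
          ≤ (f q i A : ℝ) := by exact_mod_cast hcnt
        _ ≤ F ^ ((q : ℝ) / p) := hkey q i hq1 hqr hiUB
    -- put things together
    have h1 : cnt A ((H, B) :: L) ≤ ∑ X' ∈ S',
        (B.powerset.filter (fun Y => (H ∩ X').card + Y.card ∈ A)).card := by
      unfold cnt
      calc ((chainU ((H, B) :: L)).powerset.filter
          (fun X => ∀ pb ∈ (H, B) :: L, (pb.1 ∩ X).card ∈ A)).card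
          ≤ (S'.biUnion (fun X' => (B.powerset.filter
            (fun Y => (H ∩ X').card + Y.card ∈ A)).image (fun Y => X' ∪ Y))).card :=
            card_le_card hsub
        _ ≤ ∑ X' ∈ S', ((B.powerset.filter
            (fun Y => (H ∩ X').card + Y.card ∈ A)).image (fun Y => X' ∪ Y)).card :=
            card_biUnion_le
        _ ≤ ∑ X' ∈ S',
            (B.powerset.filter (fun Y => (H ∩ X').card + Y.card ∈ A)).card :=
            Finset.sum_le_sum (fun X' _ => card_image_le)
    have h2 : (cnt A ((H, B) :: L) : ℝ) ≤ (S'.card : ℝ) * F ^ ((q : ℝ) / p) := by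
      calc (cnt A ((H, B) :: L) : ℝ)
          ≤ (∑ X' ∈ S',
            (B.powerset.filter (fun Y => (H ∩ X').card + Y.card ∈ A)).card : ℕ) := by
            exact_mod_cast h1
        _ = ∑ X' ∈ S',
            ((B.powerset.filter (fun Y => (H ∩ X').card + Y.card ∈ A)).card : ℝ) := by
            push_cast; ring
        _ ≤ ∑ _X' ∈ S', F ^ ((q : ℝ) / p) := Finset.sum_le_sum hcard_bound
        _ = (S'.card : ℝ) * F ^ ((q : ℝ) / p) := by
            rw [Finset.sum_const, nsmul_eq_mul]
    have hih : (S'.card : ℝ) ≤ F ^ ((U'.card : ℝ) / p) := ih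
    have h3 : (cnt A ((H, B) :: L) : ℝ) ≤ F ^ ((U'.card : ℝ) / p) * F ^ ((q : ℝ) / p) := by
      calc (cnt A ((H, B) :: L) : ℝ) ≤ (S'.card : ℝ) * F ^ ((q : ℝ) / p) := h2
        _ ≤ F ^ ((U'.card : ℝ) / p) * F ^ ((q : ℝ) / p) :=
          mul_le_mul_of_nonneg_right hih (Real.rpow_nonneg (le_of_lt hF0) _)
    have hcardU : ((chainU ((H, B) :: L)).card : ℝ) = (U'.card : ℝ) + (q : ℝ) := by
      rw [chainU_cons]
      have : (B ∪ U').card = q + U'.card := Finset.card_union_of_disjoint hdisj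
      rw [this]
      push_cast
      ring
    calc (cnt A ((H, B) :: L) : ℝ)
        ≤ F ^ ((U'.card : ℝ) / p) * F ^ ((q : ℝ) / p) := h3
      _ = F ^ (((U'.card : ℝ) + (q : ℝ)) / p) := by
          rw [← Real.rpow_add hF0, ← add_div]
      _ = F ^ (((chainU ((H, B) :: L)).card : ℝ) / p) := by rw [hcardU]

end TransversalAux

open TransversalAux in
theorem transversal_count_upper_bound (r : ℕ) (hr : 1 ≤ r)
    (A : Finset ℕ) (hA : A.Nonempty) (hAr : ∀ a ∈ A, a ≤ r)
    (p i₀ : ℕ) (hp : 1 ≤ p) (hpr : p ≤ r) (hi₀ : i₀ ≤ r - p)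
    (hmax : ∀ q i : ℕ, 1 ≤ q → q ≤ r → i ≤ r - q →
      (f q i A : ℝ) ^ ((1 : ℝ) / q) ≤ (f p i₀ A : ℝ) ^ ((1 : ℝ) / p)) :
    ∃ C : ℝ, 0 < C ∧ ∀ n : ℕ, r ≤ n →
      ∀ E : Finset (Finset (Fin n)),
        (∀ H ∈ E, H.card = r) → (∀ v : Fin n, ∃ H ∈ E, v ∈ H) →
        ({S : Finset (Fin n) | ∀ H ∈ E, (H ∩ S).card ∈ A}.ncard : ℝ) ≤
          C * (f p i₀ A : ℝ) ^ ((n : ℝ) / p) := by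
  classical
  obtain ⟨a, haA⟩ := hA
  have har := hAr a haA
  set F : ℝ := (f p i₀ A : ℝ) with hF
  have hp0 : (0 : ℝ) < (p : ℝ) := by exact_mod_cast hp
  have hr0 : (0 : ℝ) < (r : ℝ) := by exact_mod_cast hr
  -- 1 ≤ f r 0 A
  have hfr : 1 ≤ f r 0 A := by
    unfold f
    have h0 : a ∈ A.filter (fun a => 0 ≤ a) := by simp [haA]
    calc 1 ≤ r.choose (a - 0) := Nat.choose_pos (by omega)
      _ ≤ ∑ b ∈ A.filter (fun a => 0 ≤ a), r.choose (b - 0) :=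
        Finset.single_le_sum (fun _ _ => Nat.zero_le _) h0
  have hmaxr := hmax r 0 hr le_rfl (by omega)
  have h1r : (1 : ℝ) ≤ (f r 0 A : ℝ) ^ ((1 : ℝ) / r) :=
    Real.one_le_rpow (by exact_mod_cast hfr) (by positivity)
  have hFp : (1 : ℝ) ≤ F ^ ((1 : ℝ) / p) := le_trans h1r hmaxr
  have hF1 : (1 : ℝ) ≤ F := by
    by_contra hlt
    push_neg at hlt
    have hF0 : (0 : ℝ) ≤ F := by positivity
    have : F ^ ((1 : ℝ) / p) < 1 := Real.rpow_lt_one hF0 hlt (by positivity)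
    linarith
  have hFpos : (0 : ℝ) < F := lt_of_lt_of_le one_pos hF1
  -- key pointwise bound
  have hkey : ∀ q i : ℕ, 1 ≤ q → q ≤ r → i ≤ r - q → (f q i A : ℝ) ≤ F ^ ((q : ℝ) / p) := by
    intro q i hq hqr hi
    have h := hmax q i hq hqr hi
    have hq0 : (q : ℝ) ≠ 0 := by
      have : (0 : ℝ) < (q : ℝ) := by exact_mod_cast hq
      linarith
    have hx0 : (0 : ℝ) ≤ (f q i A : ℝ) := by positivity
    calc (f q i A : ℝ) = ((f q i A : ℝ) ^ ((1 : ℝ) / q)) ^ ((q : ℕ) : ℝ) := by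
          rw [← Real.rpow_mul hx0, one_div_mul_cancel hq0, Real.rpow_one]
      _ ≤ (F ^ ((1 : ℝ) / p)) ^ ((q : ℕ) : ℝ) :=
          Real.rpow_le_rpow (Real.rpow_nonneg hx0 _) h (by positivity)
      _ = F ^ ((q : ℝ) / p) := by
          rw [← Real.rpow_mul (le_of_lt hFpos)]
          congr 1
          ring
  refine ⟨1, one_pos, ?_⟩
  intro n hn E hE hcov
  obtain ⟨L, hL, hUL⟩ := exists_chain hcov
  rw [one_mul]
  have hsubset : {S : Finset (Fin n) | ∀ H ∈ E, (H ∩ S).card ∈ A} ⊆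
      ↑((chainU L).powerset.filter (fun X => ∀ pb ∈ L, (pb.1 ∩ X).card ∈ A)) := by
    intro S hS
    rw [Finset.mem_coe, Finset.mem_filter, Finset.mem_powerset]
    exact ⟨by rw [hUL]; exact Finset.subset_univ S,
      fun pb hpb => hS pb.1 (edge_mem hL pb hpb)⟩
  have h1 : {S : Finset (Fin n) | ∀ H ∈ E, (H ∩ S).card ∈ A}.ncard ≤ cnt A L := by
    have h := Set.ncard_le_ncard hsubset (Finset.finite_toSet _)
    rwa [Set.ncard_coe_finset] at h
  have h2 := cnt_le hF1 hkey hE hL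
  rw [hUL] at h2
  have hcard : (((Finset.univ : Finset (Fin n))).card : ℝ) = (n : ℝ) := by
    simp
  rw [hcard] at h2
  calc ({S : Finset (Fin n) | ∀ H ∈ E, (H ∩ S).card ∈ A}.ncard : ℝ)
      ≤ (cnt A L : ℝ) := by exact_mod_cast h1
    _ ≤ F ^ ((n : ℝ) / p) := h2
end

section
/- Let r ≥ 1 and n ≥ r, let A be the set of all even non-negative integers and B the set of all odd non-negative integers. Then the maximum number of A-transversals over all r-uniform hypergraphs on n vertices with no isolated vertices, and the maximum number of B-transversals over all r-uniform hypergraphs on n vertices with no isolated vertices, both equal 2^{⌊(r−1)n/r⌋}. -/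
variable {α : Type*} [DecidableEq α]

lemma card_symmDiff_mod (s t : Finset α) : (symmDiff s t).card % 2 = (s.card + t.card) % 2 := by
  rw [symmDiff_def]
  rw [show (s \ t ⊔ t \ s) = (s \ t) ∪ (t \ s) from rfl,
    Finset.card_union_of_disjoint disjoint_sdiff_sdiff]
  have h1 := Finset.card_sdiff_add_card_inter s t
  have h2 := Finset.card_sdiff_add_card_inter t s
  rw [Finset.inter_comm] at h2
  omega

lemma inter_symmDiff_mod (H S S' : Finset α) :
    (H ∩ symmDiff S S').card % 2 = ((H ∩ S).card + (H ∩ S').card) % 2 := by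
  rw [show H ∩ symmDiff S S' = symmDiff (H ∩ S) (H ∩ S') from inf_symmDiff_distrib_left H S S']
  exact card_symmDiff_mod _ _

lemma list_zero (l : List (α × Finset α)) (hmem : ∀ p ∈ l, p.1 ∈ p.2)
    (hpw : l.Pairwise (fun p q => q.1 ∉ p.2))
    (W : Finset α) (hW : ∀ p ∈ l, (p.2 ∩ W).card % 2 = 0)
    (hsub : W ⊆ (l.map Prod.fst).toFinset) : W = ∅ := by
  induction l with
  | nil => simpa using Finset.subset_empty.mp (by simpa using hsub)
  | cons p l ih =>
    rw [List.pairwise_cons] at hpw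
    by_cases hv : p.1 ∈ W
    · exfalso
      have hHW : p.2 ∩ W = {p.1} := by
        apply Finset.Subset.antisymm
        · intro x hx
          obtain ⟨hxH, hxW⟩ := Finset.mem_inter.mp hx
          have hx' := hsub hxW
          simp only [List.map_cons, List.toFinset_cons, Finset.mem_insert,
            List.mem_toFinset, List.mem_map] at hx'
          rcases hx' with h | ⟨q, hq, hqx⟩
          · simp [h]
          · exact absurd (hqx ▸ hpw.1 q hq) (fun h => h hxH)
        · simp [Finset.mem_inter, hmem p List.mem_cons_self, hv]
      have := hW p List.mem_cons_self
      rw [hHW] at this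
      simp at this
    · refine ih (fun q hq => hmem q (List.mem_cons_of_mem p hq)) hpw.2
        (fun q hq => hW q (List.mem_cons_of_mem p hq)) ?_
      intro x hx
      have hx' := hsub hx
      simp only [List.map_cons, List.toFinset_cons, Finset.mem_insert] at hx'
      rcases hx' with h | h
      · exact absurd (h ▸ hx) hv
      · exact h

lemma restrict_injOn (l : List (α × Finset α)) (hmem : ∀ p ∈ l, p.1 ∈ p.2)
    (hpw : l.Pairwise (fun p q => q.1 ∉ p.2)) (ε : ℕ) :
    Set.InjOn (fun S : Finset α => S \ (l.map Prod.fst).toFinset)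
      {S | ∀ p ∈ l, (p.2 ∩ S).card % 2 = ε} := by
  intro S hS S' hS' h
  simp only [Set.mem_setOf_eq] at hS hS'
  simp only at h
  set D := (l.map Prod.fst).toFinset
  have hW0 : ∀ p ∈ l, (p.2 ∩ symmDiff S S').card % 2 = 0 := by
    intro p hp
    rw [inter_symmDiff_mod, Nat.add_mod, hS p hp, hS' p hp]
    omega
  have hWsub : symmDiff S S' ⊆ D := by
    intro x hx
    by_contra hxD
    have h1 : x ∈ S \ D ↔ x ∈ S' \ D := by rw [h]
    simp only [Finset.mem_sdiff, hxD, not_false_iff, and_true] at h1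
    rcases Finset.mem_symmDiff.mp hx with ⟨h2, h3⟩ | ⟨h2, h3⟩ <;> tauto
  have := list_zero l hmem hpw _ hW0 hWsub
  exact symmDiff_eq_bot.mp this
lemma count_le [Fintype α] (l : List (α × Finset α)) (hmem : ∀ p ∈ l, p.1 ∈ p.2)
    (hpw : l.Pairwise (fun p q => q.1 ∉ p.2)) (ε : ℕ) :
    {S : Finset α | ∀ p ∈ l, (p.2 ∩ S).card % 2 = ε}.ncard
      ≤ 2 ^ (Fintype.card α - l.length) := by
  set D := (l.map Prod.fst).toFinset with hD
  have hne : l.Pairwise (fun p q : α × Finset α => p.1 ≠ q.1) := by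
    refine hpw.imp_of_mem ?_
    intro p q hp hq hpq he
    exact hpq (he ▸ hmem p hp)
  have hnodup : (l.map Prod.fst).Nodup :=
    List.Pairwise.map Prod.fst (fun a b h => h) hne
  have hDcard : D.card = l.length := by
    rw [hD, List.toFinset_card_of_nodup hnodup, List.length_map]
  set T := {S : Finset α | ∀ p ∈ l, (p.2 ∩ S).card % 2 = ε} with hT
  have himg : (fun S : Finset α => S \ D) '' T ⊆ ↑((Finset.univ \ D).powerset) := by
    rintro _ ⟨S, _, rfl⟩
    simp only [Finset.coe_powerset, Set.mem_preimage, Set.mem_powerset_iff,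
      Finset.coe_sdiff]
    intro x hx
    simp only [Finset.coe_sdiff, Set.mem_diff, Finset.mem_coe] at hx ⊢
    exact ⟨Finset.mem_univ x, hx.2⟩
  calc T.ncard = ((fun S : Finset α => S \ D) '' T).ncard :=
        (Set.ncard_image_of_injOn (restrict_injOn l hmem hpw ε)).symm
    _ ≤ (↑((Finset.univ \ D).powerset) : Set (Finset α)).ncard :=
        Set.ncard_le_ncard himg (Set.toFinite _)
    _ = ((Finset.univ \ D).powerset).card := Set.ncard_coe_finset _
    _ = 2 ^ (Fintype.card α - l.length) := by
        rw [Finset.card_powerset, Finset.card_sdiff_of_subset (Finset.subset_univ D),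
          Finset.card_univ, hDcard]

lemma greedy [Fintype α] (E : Finset (Finset α)) (hcov : ∀ v : α, ∃ H ∈ E, v ∈ H) :
    ∃ l : List (α × Finset α), (∀ p ∈ l, p.2 ∈ E ∧ p.1 ∈ p.2) ∧
      l.Pairwise (fun p q => q.1 ∉ p.2) ∧ (∀ v : α, ∃ p ∈ l, v ∈ p.2) := by
  suffices claim : ∀ k (U : Finset α), U.card ≤ k →
      ∃ l : List (α × Finset α), (∀ p ∈ l, p.2 ∈ E ∧ p.1 ∈ p.2 ∧ p.1 ∈ U) ∧
        l.Pairwise (fun p q => q.1 ∉ p.2) ∧ ∀ v ∈ U, ∃ p ∈ l, v ∈ p.2 by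
    obtain ⟨l, h1, h2, h3⟩ := claim Finset.univ.card Finset.univ le_rfl
    exact ⟨l, fun p hp => ⟨(h1 p hp).1, (h1 p hp).2.1⟩, h2,
      fun v => h3 v (Finset.mem_univ v)⟩
  intro k
  induction k with
  | zero =>
    intro U hU
    have : U = ∅ := Finset.card_eq_zero.mp (Nat.le_zero.mp hU)
    exact ⟨[], by simp, by simp, by simp [this]⟩
  | succ k ih =>
    intro U hU
    by_cases hUe : U = ∅
    · exact ⟨[], by simp, by simp, by simp [hUe]⟩
    · obtain ⟨v, hv⟩ := Finset.nonempty_iff_ne_empty.mpr hUe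
      obtain ⟨H, hHE, hvH⟩ := hcov v
      have hlt : (U \ H).card < U.card := by
        apply Finset.card_lt_card
        constructor
        · exact Finset.sdiff_subset
        · intro hsub
          have := hsub hv
          simp [hvH] at this
      obtain ⟨l, h1, h2, h3⟩ := ih (U \ H) (by omega)
      refine ⟨(v, H) :: l, ?_, ?_, ?_⟩
      · rintro p hp
        rcases List.mem_cons.mp hp with rfl | hp
        · exact ⟨hHE, hvH, hv⟩
        · obtain ⟨a, b, c⟩ := h1 p hp
          exact ⟨a, b, (Finset.mem_sdiff.mp c).1⟩
      · rw [List.pairwise_cons]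
        refine ⟨?_, h2⟩
        intro q hq
        exact (Finset.mem_sdiff.mp (h1 q hq).2.2).2
      · intro v' hv'
        by_cases hvH' : v' ∈ H
        · exact ⟨(v, H), List.mem_cons_self, hvH'⟩
        · obtain ⟨p, hp, hp2⟩ := h3 v' (Finset.mem_sdiff.mpr ⟨hv', hvH'⟩)
          exact ⟨p, List.mem_cons_of_mem _ hp, hp2⟩
lemma count_eq [Fintype α] (m : ℕ) (e : Fin m → Finset α) (d : Fin m → α)
    (hd : ∀ i, d i ∈ e i) (hpriv : ∀ i j, d i ∈ e j → i = j) (ε : ℕ) (hε : ε < 2) :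
    {S : Finset α | ∀ i, (e i ∩ S).card % 2 = ε}.ncard = 2 ^ (Fintype.card α - m) := by
  classical
  set l : List (α × Finset α) := (List.finRange m).map (fun i => (d i, e i)) with hl
  have hmem : ∀ p ∈ l, p.1 ∈ p.2 := by
    rintro p hp
    simp only [hl, List.mem_map] at hp
    obtain ⟨i, _, rfl⟩ := hp
    exact hd i
  have hpw : l.Pairwise (fun p q => q.1 ∉ p.2) := by
    refine List.Pairwise.map _ ?_ (List.pairwise_lt_finRange m)
    intro i j hij hmem'
    exact absurd (hpriv j i hmem') (by omega)
  have hTeq : {S : Finset α | ∀ i, (e i ∩ S).card % 2 = ε}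
      = {S : Finset α | ∀ p ∈ l, (p.2 ∩ S).card % 2 = ε} := by
    ext S
    simp only [Set.mem_setOf_eq, hl, List.mem_map]
    constructor
    · rintro h p ⟨i, _, rfl⟩
      exact h i
    · intro h i
      exact h (d i, e i) ⟨i, List.mem_finRange i, rfl⟩
  have hdinj : Function.Injective d := fun i j hij => hpriv i j (by rw [hij]; exact hd j)
  set D : Finset α := (l.map Prod.fst).toFinset with hD
  have hDeq : D = Finset.image d Finset.univ := by
    ext x
    simp [hD, hl, List.mem_map, Finset.mem_image]
  have hDcard : D.card = m := by
    rw [hDeq, Finset.card_image_of_injective _ hdinj, Finset.card_univ, Fintype.card_fin]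
  have hdD : ∀ i, d i ∈ D := by intro i; rw [hDeq]; exact Finset.mem_image_of_mem d (Finset.mem_univ i)
  set T := {S : Finset α | ∀ p ∈ l, (p.2 ∩ S).card % 2 = ε} with hT
  -- image is exactly the powerset of univ \ D
  have hinterimg : ∀ (F : Finset (Fin m)) (i : Fin m),
      e i ∩ Finset.image d F = if i ∈ F then {d i} else ∅ := by
    intro F i
    ext x
    simp only [Finset.mem_inter, Finset.mem_image]
    constructor
    · rintro ⟨hx, j, hj, rfl⟩
      have := hpriv j i hx
      subst this
      simp [hj]
    · intro hx
      by_cases hiF : i ∈ F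
      · simp only [if_pos hiF, Finset.mem_singleton] at hx
        subst hx
        exact ⟨hd i, i, hiF, rfl⟩
      · simp [if_neg hiF] at hx
  have himg : (fun S : Finset α => S \ D) '' T = ↑((Finset.univ \ D).powerset) := by
    apply Set.Subset.antisymm
    · rintro _ ⟨S, _, rfl⟩
      simp only [Finset.coe_powerset, Set.mem_preimage, Set.mem_powerset_iff, Finset.coe_sdiff]
      intro x hx
      simp only [Finset.coe_sdiff, Set.mem_diff, Finset.mem_coe] at hx ⊢
      exact ⟨Finset.mem_univ x, hx.2⟩
    · intro X hX
      simp only [Finset.coe_powerset, Set.mem_preimage, Set.mem_powerset_iff] at hX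
      have hXD : ∀ i, d i ∉ X := by
        intro i hiX
        have := hX hiX
        simp only [Finset.coe_sdiff, Set.mem_diff, Finset.mem_coe] at this
        exact this.2 (hdD i)
      set F : Finset (Fin m) := Finset.univ.filter (fun i => (e i ∩ X).card % 2 ≠ ε) with hF
      set S : Finset α := X ∪ Finset.image d F with hS
      have hcut : ∀ i : Fin m, e i ∩ S = (e i ∩ X) ∪ (if i ∈ F then {d i} else ∅) := by
        intro i
        rw [hS, Finset.inter_union_distrib_left, hinterimg F i]
      have hST : S ∈ T := by
        intro p hp
        simp only [hl, List.mem_map] at hp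
        obtain ⟨i, -, rfl⟩ := hp
        show (e i ∩ S).card % 2 = ε
        rw [hcut i]
        by_cases hiF : i ∈ F
        · have hdx : d i ∉ e i ∩ X := fun h => hXD i (Finset.mem_inter.mp h).2
          rw [if_pos hiF, Finset.union_comm, ← Finset.insert_eq,
            Finset.card_insert_of_notMem hdx]
          have := (Finset.mem_filter.mp hiF).2
          omega
        · rw [if_neg hiF, Finset.union_empty]
          have : ¬ ((e i ∩ X).card % 2 ≠ ε) := fun h => hiF (Finset.mem_filter.mpr ⟨Finset.mem_univ i, h⟩)
          omega
      refine ⟨S, hST, ?_⟩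
      show (X ∪ Finset.image d F) \ D = X
      rw [Finset.union_sdiff_distrib]
      have h1 : X \ D = X := by
        apply Finset.sdiff_eq_self_of_disjoint
        rw [Finset.disjoint_left]
        intro x hxX hxD
        have := hX hxX
        simp only [Finset.coe_sdiff, Set.mem_diff, Finset.mem_coe] at this
        exact this.2 hxD
      have h2 : Finset.image d F \ D = ∅ := by
        rw [Finset.sdiff_eq_empty_iff_subset]
        intro x hx
        obtain ⟨i, _, rfl⟩ := Finset.mem_image.mp hx
        exact hdD i
      rw [h1, h2, Finset.union_empty]
  rw [hTeq]
  calc T.ncard = ((fun S : Finset α => S \ D) '' T).ncard :=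
      (Set.ncard_image_of_injOn (restrict_injOn l hmem hpw ε)).symm
    _ = ((Finset.univ \ D).powerset).card := by rw [himg, Set.ncard_coe_finset]
    _ = 2 ^ (Fintype.card α - m) := by
        rw [Finset.card_powerset, Finset.card_sdiff_of_subset (Finset.subset_univ D),
          Finset.card_univ, hDcard]

lemma mem_foldr_union (l : List (α × Finset α)) (v : α) (h : ∃ p ∈ l, v ∈ p.2) :
    v ∈ l.foldr (fun p acc => p.2 ∪ acc) ∅ := by
  induction l with
  | nil => simp at h
  | cons p t ih =>
    simp only [List.foldr_cons, Finset.mem_union]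
    obtain ⟨q, hq, hv⟩ := h
    rcases List.mem_cons.mp hq with rfl | hq
    · exact Or.inl hv
    · exact Or.inr (ih ⟨q, hq, hv⟩)

lemma cover_length [Fintype α] (r : ℕ) (l : List (α × Finset α))
    (hc : ∀ p ∈ l, p.2.card ≤ r) (hcov : ∀ v : α, ∃ p ∈ l, v ∈ p.2) :
    Fintype.card α ≤ r * l.length := by
  have hsub : Finset.univ ⊆ l.foldr (fun (p : α × Finset α) acc => p.2 ∪ acc) ∅ :=
    fun v _ => mem_foldr_union l v (hcov v)
  have hcard : ∀ (l' : List (α × Finset α)), (∀ p ∈ l', p.2.card ≤ r) →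
      (l'.foldr (fun (p : α × Finset α) acc => p.2 ∪ acc) ∅).card ≤ r * l'.length := by
    intro l'
    induction l' with
    | nil => simp
    | cons p t ih =>
      intro h
      simp only [List.foldr_cons, List.length_cons]
      calc (p.2 ∪ t.foldr (fun (p : α × Finset α) acc => p.2 ∪ acc) ∅).card
          ≤ p.2.card + (t.foldr (fun (p : α × Finset α) acc => p.2 ∪ acc) ∅).card := Finset.card_union_le _ _
        _ ≤ r + r * t.length := add_le_add (h p List.mem_cons_self)
            (ih (fun q hq => h q (List.mem_cons_of_mem p hq)))
        _ = r * (t.length + 1) := by ring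
  calc Fintype.card α = Finset.univ.card := Finset.card_univ.symm
    _ ≤ _ := Finset.card_le_card hsub
    _ ≤ r * l.length := hcard l hc
lemma main_aux (r n : ℕ) (hr : 1 ≤ r) (hn : r ≤ n) (ε : ℕ) (hε : ε < 2) :
    IsGreatest {m : ℕ | ∃ E : Finset (Finset (Fin n)),
      (∀ H ∈ E, H.card = r) ∧ (∀ v : Fin n, ∃ H ∈ E, v ∈ H) ∧
      {S : Finset (Fin n) | ∀ H ∈ E, (H ∩ S).card % 2 = ε}.ncard = m}
      (2 ^ ((r - 1) * n / r)) := by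
  set m : ℕ := (n + r - 1) / r with hm
  have hr0 : 0 < r := hr
  have hn0 : 0 < n := lt_of_lt_of_le hr0 hn
  have hdm := Nat.div_add_mod (n + r - 1) r
  rw [← hm] at hdm
  have hmod := Nat.mod_lt (n + r - 1) hr0
  have hrm1 : n ≤ r * m := by omega
  have hrm2 : r * m ≤ n + r - 1 := by omega
  have hm1 : 1 ≤ m := by
    rcases Nat.eq_zero_or_pos m with h | h
    · rw [h, Nat.mul_zero] at hrm1; omega
    · exact h
  have hmn : m ≤ n := by
    have h4 : n - 1 ≤ r * (n - 1) := Nat.le_mul_of_pos_left _ hr0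
    have h5 : r * (n - 1) + r = r * n := by rw [← Nat.mul_succ]; congr 1; omega
    by_contra hc
    push_neg at hc
    have : r * n < r * m := (Nat.mul_lt_mul_left hr0).mpr hc
    omega
  have hkey : (r - 1) * n / r = n - m := by
    have e1 : r * (n - m) + r * m = r * n := by rw [← Nat.mul_add]; congr 1; omega
    have e2 : (r - 1) * n + n = r * n := by
      have h := Nat.sub_one_mul r n
      have h2 : n ≤ r * n := Nat.le_mul_of_pos_left n hr0
      omega
    have e3 : (r - 1) * n = r * (n - m) + (r * m - n) := by omega
    rw [e3, Nat.mul_add_div hr0, Nat.div_eq_of_lt (by omega), Nat.add_zero]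
  have hstep : ∀ k, k + 2 ≤ m → k * r + 2 * r ≤ r * m := by
    intro k hk
    calc k * r + 2 * r = (k + 2) * r := by ring
      _ ≤ m * r := Nat.mul_le_mul_right r hk
      _ = r * m := Nat.mul_comm m r
  -- the construction
  set a : Fin m → ℕ := fun i => min (i.val * r) (n - r) with ha
  have ha_le : ∀ i, a i ≤ n - r := fun i => min_le_right _ _
  have ha_lt : ∀ i, a i < n := fun i => by have := ha_le i; omega
  have hair : ∀ i, a i + r - 1 < n := fun i => by have := ha_le i; omega
  have ha_int : ∀ i : Fin m, i.val + 1 < m → a i = i.val * r := by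
    intro i hi
    have := hstep i.val (by omega)
    exact min_eq_left (by omega)
  have ha_last : ∀ i : Fin m, i.val + 1 = m → a i = n - r := by
    intro i hi
    have h : (m - 1) * r + 1 * r = m * r := by rw [← Nat.add_mul]; congr 1; omega
    have hc : r * m = m * r := Nat.mul_comm r m
    refine min_eq_right ?_
    have : i.val = m - 1 := by omega
    rw [this]
    omega
  set e : Fin m → Finset (Fin n) := fun i => Finset.Icc ⟨a i, ha_lt i⟩ ⟨a i + r - 1, hair i⟩
    with he
  have hmem_e : ∀ (i : Fin m) (v : Fin n), v ∈ e i ↔ a i ≤ v.val ∧ v.val ≤ a i + r - 1 := by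
    intro i v
    rw [he]
    simp [Finset.mem_Icc, Fin.le_def]
  have hcard_e : ∀ i, (e i).card = r := by
    intro i
    rw [he]
    simp only [Fin.card_Icc]
    omega
  set d : Fin m → Fin n := fun i =>
    if i.val + 1 = m then ⟨n - 1, by omega⟩ else ⟨a i, ha_lt i⟩ with hdd
  have hd_last : ∀ i : Fin m, i.val + 1 = m → (d i).val = n - 1 := by
    intro i hi; simp [hdd, hi]
  have hd_int : ∀ i : Fin m, ¬ (i.val + 1 = m) → (d i).val = a i := by
    intro i hi; simp [hdd, hi]
  have hd : ∀ i, d i ∈ e i := by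
    intro i
    rw [hmem_e]
    by_cases hi : i.val + 1 = m
    · rw [hd_last i hi]
      have := ha_last i hi
      omega
    · rw [hd_int i hi]
      omega
  have hpriv : ∀ i j, d i ∈ e j → i = j := by
    intro i j h
    rw [hmem_e] at h
    by_cases hi : i.val + 1 = m <;> by_cases hj : j.val + 1 = m
    · exact Fin.ext (by omega)
    · exfalso
      rw [hd_last i hi] at h
      have haj := ha_int j (by omega)
      have := hstep j.val (by omega)
      omega
    · exfalso
      rw [hd_int i hi] at h
      have hai := ha_int i (by omega)
      have haj := ha_last j hj
      have := hstep i.val (by omega)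
      omega
    · rw [hd_int i hi] at h
      have hai := ha_int i (by omega)
      have haj := ha_int j (by omega)
      rw [hai, haj] at h
      have h1 : j.val ≤ i.val := Nat.le_of_mul_le_mul_right (by omega) hr0
      have h2 : i.val < j.val + 1 := by
        have : i.val * r < (j.val + 1) * r := by
          have : (j.val + 1) * r = j.val * r + r := by ring
          omega
        exact Nat.lt_of_mul_lt_mul_right this
      exact Fin.ext (by omega)
  have hcov : ∀ v : Fin n, ∃ i : Fin m, v ∈ e i := by
    intro v
    by_cases hw : v.val < (m - 1) * r
    · have hdiv : v.val / r < m - 1 := Nat.div_lt_of_lt_mul (by rw [Nat.mul_comm]; exact hw)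
      refine ⟨⟨v.val / r, by omega⟩, ?_⟩
      rw [hmem_e]
      have hai : a ⟨v.val / r, by omega⟩ = (v.val / r) * r :=
        ha_int _ (by show v.val / r + 1 < m; omega)
      have h1 : (v.val / r) * r ≤ v.val := Nat.div_mul_le_self _ _
      have h2 := Nat.div_add_mod v.val r
      have h3 := Nat.mod_lt v.val hr0
      have h4 : r * (v.val / r) = (v.val / r) * r := Nat.mul_comm _ _
      rw [hai]
      omega
    · refine ⟨⟨m - 1, by omega⟩, ?_⟩
      rw [hmem_e]
      have hai : a ⟨m - 1, by omega⟩ = n - r := ha_last _ (by show m - 1 + 1 = m; omega)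
      have h : (m - 1) * r + 1 * r = m * r := by rw [← Nat.add_mul]; congr 1; omega
      have hc : r * m = m * r := Nat.mul_comm r m
      have hvn : v.val < n := v.isLt
      rw [hai]
      omega
  constructor
  · -- membership: the construction achieves the bound
    refine ⟨Finset.image e Finset.univ, ?_, ?_, ?_⟩
    · intro H hH
      obtain ⟨i, _, rfl⟩ := Finset.mem_image.mp hH
      exact hcard_e i
    · intro v
      obtain ⟨i, hi⟩ := hcov v
      exact ⟨e i, Finset.mem_image_of_mem e (Finset.mem_univ i), hi⟩
    · have hTeq : {S : Finset (Fin n) | ∀ H ∈ Finset.image e Finset.univ, (H ∩ S).card % 2 = ε}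
          = {S : Finset (Fin n) | ∀ i, (e i ∩ S).card % 2 = ε} := by
        ext S
        simp only [Set.mem_setOf_eq, Finset.mem_image]
        constructor
        · intro h i
          exact h (e i) ⟨i, Finset.mem_univ i, rfl⟩
        · rintro h H ⟨i, -, rfl⟩
          exact h i
      rw [hTeq, count_eq m e d hd hpriv ε hε, Fintype.card_fin, hkey]
  · -- upper bound
    rintro x ⟨E, hE1, hE2, hE3⟩
    obtain ⟨l, hl1, hl2, hl3⟩ := greedy E hE2
    have hsub : {S : Finset (Fin n) | ∀ H ∈ E, (H ∩ S).card % 2 = ε}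
        ⊆ {S : Finset (Fin n) | ∀ p ∈ l, (p.2 ∩ S).card % 2 = ε} := by
      intro S hS p hp
      exact hS p.2 (hl1 p hp).1
    have hb : x ≤ 2 ^ (n - l.length) := by
      rw [← hE3]
      calc _ ≤ {S : Finset (Fin n) | ∀ p ∈ l, (p.2 ∩ S).card % 2 = ε}.ncard :=
            Set.ncard_le_ncard hsub (Set.toFinite _)
        _ ≤ 2 ^ (Fintype.card (Fin n) - l.length) :=
            count_le l (fun p hp => (hl1 p hp).2) hl2 ε
        _ = 2 ^ (n - l.length) := by rw [Fintype.card_fin]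
    have hlen : n ≤ r * l.length := by
      have := cover_length r l (fun p hp => le_of_eq (hE1 p.2 (hl1 p hp).1)) hl3
      rwa [Fintype.card_fin] at this
    have hml : m ≤ l.length := by
      by_contra hc
      push_neg at hc
      have h5 : r * l.length ≤ r * (m - 1) := Nat.mul_le_mul_left r (by omega)
      have h6 : r * (m - 1) + r = r * m := by rw [← Nat.mul_succ]; congr 1; omega
      omega
    calc x ≤ 2 ^ (n - l.length) := hb
      _ ≤ 2 ^ (n - m) := Nat.pow_le_pow_right (by norm_num) (by omega)
      _ = 2 ^ ((r - 1) * n / r) := by rw [hkey]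

theorem max_parity_transversals (r n : ℕ) (hr : 1 ≤ r) (hn : r ≤ n) :
    IsGreatest {m : ℕ | ∃ E : Finset (Finset (Fin n)),
      (∀ H ∈ E, H.card = r) ∧ (∀ v : Fin n, ∃ H ∈ E, v ∈ H) ∧
      {S : Finset (Fin n) | ∀ H ∈ E, Even (H ∩ S).card}.ncard = m}
      (2 ^ ((r - 1) * n / r)) ∧
    IsGreatest {m : ℕ | ∃ E : Finset (Finset (Fin n)),
      (∀ H ∈ E, H.card = r) ∧ (∀ v : Fin n, ∃ H ∈ E, v ∈ H) ∧
      {S : Finset (Fin n) | ∀ H ∈ E, Odd (H ∩ S).card}.ncard = m}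
      (2 ^ ((r - 1) * n / r)) := by
  constructor
  · have h0 := main_aux r n hr hn 0 (by norm_num)
    convert h0 using 2 with x
    funext x
    apply propext
    apply exists_congr
    intro E
    have : {S : Finset (Fin n) | ∀ H ∈ E, Even (H ∩ S).card}
        = {S : Finset (Fin n) | ∀ H ∈ E, (H ∩ S).card % 2 = 0} := by
      ext S
      simp [Nat.even_iff]
    rw [this]
  · have h1 := main_aux r n hr hn 1 (by norm_num)
    convert h1 using 2 with x
    funext x
    apply propext
    apply exists_congr
    intro E
    have : {S : Finset (Fin n) | ∀ H ∈ E, Odd (H ∩ S).card}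
        = {S : Finset (Fin n) | ∀ H ∈ E, (H ∩ S).card % 2 = 1} := by
      ext S
      simp [Nat.odd_iff]
    rw [this]
end

section
/- Let a, k, r be integers with 0 ≤ a < k < r and let n ≥ r. Then g^{(k)}_{\{0,1,…,a\}}(n) ≥ g^{(r)}_{\{0,1,…,a\}}(n) ≥ g^{(k)}_{\{0,1,…,a\}}(n − r + k), where g^{(s)}_{\{0,1,…,a\}}(m) denotes the maximum number of {0,1,…,a}-transversals over all s-uniform hypergraphs on m vertices with no isolated vertices. -/
/-- `gTr s a m`: the maximum number of `{0,1,…,a}`-transversals over all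
`s`-uniform hypergraphs on `m` vertices with no isolated vertices. -/
noncomputable def gTr (s a m : ℕ) : ℕ :=
  sSup {c : ℕ | ∃ E : Finset (Finset (Fin m)),
    (∀ H ∈ E, H.card = s) ∧ (∀ v : Fin m, ∃ H ∈ E, v ∈ H) ∧
    {S : Finset (Fin m) | ∀ H ∈ E, (H ∩ S).card ≤ a}.ncard = c}

lemma gTr_bdd (s a m : ℕ) : BddAbove {c : ℕ | ∃ E : Finset (Finset (Fin m)),
    (∀ H ∈ E, H.card = s) ∧ (∀ v : Fin m, ∃ H ∈ E, v ∈ H) ∧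
    {S : Finset (Fin m) | ∀ H ∈ E, (H ∩ S).card ≤ a}.ncard = c} := by
  refine ⟨Nat.card (Finset (Fin m)), ?_⟩
  rintro c ⟨E, -, -, rfl⟩
  calc {S : Finset (Fin m) | ∀ H ∈ E, (H ∩ S).card ≤ a}.ncard
      ≤ (Set.univ : Set (Finset (Fin m))).ncard :=
        Set.ncard_le_ncard (Set.subset_univ _) Set.finite_univ
    _ = Nat.card (Finset (Fin m)) := Set.ncard_univ _

theorem gTr_sandwich (a k r n : ℕ) (hak : a < k) (hkr : k < r) (hn : r ≤ n) :
    gTr k a n ≥ gTr r a n ∧ gTr r a n ≥ gTr k a (n - r + k) := by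
  constructor
  · -- gTr r a n ≤ gTr k a n
    unfold gTr
    rcases Set.eq_empty_or_nonempty {c : ℕ | ∃ E : Finset (Finset (Fin n)),
        (∀ H ∈ E, H.card = r) ∧ (∀ v : Fin n, ∃ H ∈ E, v ∈ H) ∧
        {S : Finset (Fin n) | ∀ H ∈ E, (H ∩ S).card ≤ a}.ncard = c} with he | hne
    · rw [he, csSup_empty]
      exact Nat.zero_le _
    · apply csSup_le hne
      rintro c ⟨E, hcard, hcov, rfl⟩
      apply le_csSup (gTr_bdd k a n)
      refine ⟨E.biUnion (fun H => H.powersetCard k), ?_, ?_, ?_⟩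
      · intro K hK
        rcases Finset.mem_biUnion.1 hK with ⟨H, -, hKH⟩
        exact (Finset.mem_powersetCard.1 hKH).2
      · intro v
        obtain ⟨H, hH, hv⟩ := hcov v
        obtain ⟨K, hvK, hKH, hKcard⟩ :=
          Finset.exists_subsuperset_card_eq (t := H) (n := k) (Finset.singleton_subset_iff.2 hv)
            (by rw [Finset.card_singleton]; omega) (by rw [hcard H hH]; omega)
        exact ⟨K, Finset.mem_biUnion.2 ⟨H, hH, Finset.mem_powersetCard.2 ⟨hKH, hKcard⟩⟩,
          hvK (Finset.mem_singleton_self v)⟩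
      · congr 1
        ext S
        simp only [Set.mem_setOf_eq, Finset.mem_biUnion, Finset.mem_powersetCard]
        constructor
        · intro h H hH
          by_contra hc
          push_neg at hc
          obtain ⟨A, hAHS, hAcard⟩ := Finset.exists_subset_card_eq (s := H ∩ S) (n := a + 1)
            (by omega)
          obtain ⟨K, hAK, hKH, hKcard⟩ := Finset.exists_subsuperset_card_eq (n := k)
            ((Finset.subset_inter_iff.1 hAHS).1) (by omega) (by rw [hcard H hH]; omega)
          have hAKS : A ⊆ K ∩ S :=
            Finset.subset_inter hAK (Finset.subset_inter_iff.1 hAHS).2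
          have := Finset.card_le_card hAKS
          have := h K ⟨H, hH, hKH, hKcard⟩
          omega
        · rintro h K ⟨H, hH, hKH, -⟩
          exact le_trans (Finset.card_le_card
            (Finset.inter_subset_inter hKH (Finset.Subset.refl S))) (h H hH)
  · -- gTr k a (n - r + k) ≤ gTr r a n
    set m := n - r + k with hm
    have hmn : m ≤ n := by omega
    unfold gTr
    rcases Set.eq_empty_or_nonempty {c : ℕ | ∃ E : Finset (Finset (Fin m)),
        (∀ H ∈ E, H.card = k) ∧ (∀ v : Fin m, ∃ H ∈ E, v ∈ H) ∧
        {S : Finset (Fin m) | ∀ H ∈ E, (H ∩ S).card ≤ a}.ncard = c} with he | hne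
    · rw [he, csSup_empty]
      exact Nat.zero_le _
    · apply csSup_le hne
      rintro c ⟨E, hcard, hcov, rfl⟩
      set ι : Fin m ↪ Fin n := Fin.castLEEmb hmn with hι
      set T : Finset (Fin n) := Finset.univ \ Finset.univ.map ι with hT
      have hTcard : T.card = r - k := by
        rw [hT, Finset.card_sdiff_of_subset (Finset.subset_univ _)]
        simp
        omega
      have hdisj : ∀ H : Finset (Fin m), Disjoint (H.map ι) T := by
        intro H
        exact Finset.disjoint_of_subset_left
          (Finset.map_subset_map.2 (Finset.subset_univ H)) Finset.disjoint_sdiff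
      have hc1 : ∀ H ∈ E.image (fun H => H.map ι ∪ T), H.card = r := by
        intro H' hH'
        rcases Finset.mem_image.1 hH' with ⟨H, hH, rfl⟩
        rw [Finset.card_union_of_disjoint (hdisj H), Finset.card_map, hcard H hH, hTcard]
        omega
      have hc2 : ∀ v : Fin n, ∃ H ∈ E.image (fun H => H.map ι ∪ T), v ∈ H := by
        intro v
        by_cases hv : v ∈ Finset.univ.map ι
        · rcases Finset.mem_map.1 hv with ⟨w, -, rfl⟩
          obtain ⟨H, hH, hw⟩ := hcov w
          exact ⟨H.map ι ∪ T, Finset.mem_image_of_mem _ hH,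
            Finset.mem_union_left _ (Finset.mem_map_of_mem _ hw)⟩
        · obtain ⟨H, hH, -⟩ := hcov ⟨0, by omega⟩
          exact ⟨H.map ι ∪ T, Finset.mem_image_of_mem _ hH,
            Finset.mem_union_right _ (Finset.mem_sdiff.2 ⟨Finset.mem_univ v, hv⟩)⟩
      refine le_trans ?_ (le_csSup (gTr_bdd r a n)
        ⟨E.image (fun H => H.map ι ∪ T), hc1, hc2, rfl⟩)
      have himg : (fun S : Finset (Fin m) => S.map ι) ''
          {S : Finset (Fin m) | ∀ H ∈ E, (H ∩ S).card ≤ a} ⊆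
          {S : Finset (Fin n) | ∀ H ∈ E.image (fun H => H.map ι ∪ T), (H ∩ S).card ≤ a} := by
        rintro _ ⟨S, hS, rfl⟩
        intro H' hH'
        rcases Finset.mem_image.1 hH' with ⟨H, hH, rfl⟩
        have hTS : T ∩ S.map ι = ∅ := by
          rw [← Finset.disjoint_iff_inter_eq_empty]
          exact ((hdisj S).symm)
        rw [Finset.union_inter_distrib_right, hTS, Finset.union_empty,
          ← Finset.map_inter, Finset.card_map]
        exact hS H hH
      calc {S : Finset (Fin m) | ∀ H ∈ E, (H ∩ S).card ≤ a}.ncard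
          = ((fun S : Finset (Fin m) => S.map ι) ''
            {S : Finset (Fin m) | ∀ H ∈ E, (H ∩ S).card ≤ a}).ncard :=
            (Set.ncard_image_of_injective _ (Finset.map_injective ι)).symm
        _ ≤ _ := Set.ncard_le_ncard himg (Set.toFinite _)
end

section
/- Let a, k, r be integers with 0 ≤ a < k < r and let n ≥ r. Then h^{(k)}_{\{0,1,…,a\}}(n) ≥ h^{(r)}_{\{0,1,…,a\}}(n) ≥ h^{(k)}_{\{0,1,…,a\}}(n − r + k), where h^{(s)}_{\{0,1,…,a\}}(m) denotes the maximum number of maximal {0,1,…,a}-transversals over all s-uniform hypergraphs on m vertices. -/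
/-- `S` is a `{0,1,…,a}`-transversal of the hypergraph with edge set `E`. -/
def IsBoundedTransversal {m : ℕ} (a : ℕ) (E : Finset (Finset (Fin m)))
    (S : Finset (Fin m)) : Prop :=
  ∀ H ∈ E, (H ∩ S).card ≤ a

/-- `S` is a maximal `{0,1,…,a}`-transversal. -/
def IsMaxBoundedTransversal {m : ℕ} (a : ℕ) (E : Finset (Finset (Fin m)))
    (S : Finset (Fin m)) : Prop :=
  IsBoundedTransversal a E S ∧
    ∀ T : Finset (Fin m), IsBoundedTransversal a E T → S ⊆ T → S = T

/-- `hTr s a m`: the maximum number of maximal `{0,1,…,a}`-transversals over all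
`s`-uniform hypergraphs on `m` vertices. -/
noncomputable def hTr (s a m : ℕ) : ℕ :=
  sSup {c : ℕ | ∃ E : Finset (Finset (Fin m)),
    (∀ H ∈ E, H.card = s) ∧
    {S : Finset (Fin m) | IsMaxBoundedTransversal a E S}.ncard = c}

lemma hTr_bddAbove (s a m : ℕ) :
    BddAbove {c : ℕ | ∃ E : Finset (Finset (Fin m)),
      (∀ H ∈ E, H.card = s) ∧
      {S : Finset (Fin m) | IsMaxBoundedTransversal a E S}.ncard = c} := by
  refine ⟨Nat.card (Finset (Fin m)), ?_⟩
  rintro c ⟨E, -, rfl⟩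
  calc {S : Finset (Fin m) | IsMaxBoundedTransversal a E S}.ncard
      ≤ (Set.univ : Set (Finset (Fin m))).ncard :=
        Set.ncard_le_ncard (Set.subset_univ _) Set.finite_univ
    _ = Nat.card (Finset (Fin m)) := Set.ncard_univ _

lemma hTr_nonempty (s a m : ℕ) :
    Set.Nonempty {c : ℕ | ∃ E : Finset (Finset (Fin m)),
      (∀ H ∈ E, H.card = s) ∧
      {S : Finset (Fin m) | IsMaxBoundedTransversal a E S}.ncard = c} :=
  ⟨_, ∅, by simp, rfl⟩

/-- every transversal extends to a maximal one -/
lemma exists_maximal_ext {m a : ℕ} {E : Finset (Finset (Fin m))} (S : Finset (Fin m))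
    (hS : IsBoundedTransversal a E S) :
    ∃ T, IsMaxBoundedTransversal a E T ∧ S ⊆ T := by
  classical
  set F : Finset (Finset (Fin m)) :=
    Finset.univ.filter (fun T => IsBoundedTransversal a E T ∧ S ⊆ T) with hF
  have hne : F.Nonempty := ⟨S, by simp [hF, hS]⟩
  obtain ⟨T, hTF, hmax⟩ := F.exists_maximal hne
  simp only [hF, Finset.mem_filter, Finset.mem_univ, true_and] at hTF
  refine ⟨T, ⟨hTF.1, ?_⟩, hTF.2⟩
  intro U hU hTU
  by_contra hne'
  exact hne' (le_antisymm hTU (hmax (by simp [hF, hU, hTF.2.trans hTU]) hTU))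

theorem hTr_sandwich (a k r n : ℕ) (hak : a < k) (hkr : k < r) (hn : r ≤ n) :
    hTr k a n ≥ hTr r a n ∧ hTr r a n ≥ hTr k a (n - r + k) := by
  classical
  constructor
  · -- hTr k a n ≥ hTr r a n : replace each r-edge by all its k-subsets
    refine csSup_le_csSup (hTr_bddAbove k a n) (hTr_nonempty r a n) ?_
    rintro c ⟨E, hEcard, rfl⟩
    refine ⟨E.biUnion (fun H => H.powersetCard k), ?_, ?_⟩
    · intro K hK
      simp only [Finset.mem_biUnion] at hK
      obtain ⟨H, -, hK⟩ := hK
      exact (Finset.mem_powersetCard.mp hK).2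
    · have key : ∀ S : Finset (Fin n),
          IsBoundedTransversal a (E.biUnion (fun H => H.powersetCard k)) S ↔
          IsBoundedTransversal a E S := by
        intro S
        constructor
        · intro h H hH
          by_contra hc
          push_neg at hc
          obtain ⟨A, hAsub, hAcard⟩ :=
            Finset.exists_subset_card_eq (hc : a + 1 ≤ (H ∩ S).card)
          have hAH : A ⊆ H := hAsub.trans (Finset.inter_subset_left)
          obtain ⟨K, hAK, hKH, hKcard⟩ := Finset.exists_subsuperset_card_eq (n := k) hAH
            (by rw [hAcard]; omega) (by rw [hEcard H hH]; omega)
          have hKmem : K ∈ E.biUnion (fun H => H.powersetCard k) := by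
            simp only [Finset.mem_biUnion]
            exact ⟨H, hH, Finset.mem_powersetCard.mpr ⟨hKH, hKcard⟩⟩
          have : (K ∩ S).card ≤ a := h K hKmem
          have hAKS : A ⊆ K ∩ S :=
            Finset.subset_inter hAK (hAsub.trans Finset.inter_subset_right)
          have := Finset.card_le_card hAKS
          omega
        · intro h K hK
          simp only [Finset.mem_biUnion] at hK
          obtain ⟨H, hH, hK⟩ := hK
          exact le_trans (Finset.card_le_card
            (Finset.inter_subset_inter (Finset.mem_powersetCard.mp hK).1 (subset_refl S))) (h H hH)
      congr 1
      ext S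
      simp only [Set.mem_setOf_eq, IsMaxBoundedTransversal]
      constructor
      · rintro ⟨h1, h2⟩
        exact ⟨(key S).mp h1, fun T hT hST => h2 T ((key T).mpr hT) hST⟩
      · rintro ⟨h1, h2⟩
        exact ⟨(key S).mpr h1, fun T hT hST => h2 T ((key T).mp hT) hST⟩
  · -- hTr r a n ≥ hTr k a (n-r+k)
    set m := n - r + k with hm
    have hmn : m ≤ n := by omega
    refine csSup_le (hTr_nonempty k a m) ?_
    rintro c ⟨E, hEcard, rfl⟩
    -- embed
    set emb : Fin m ↪ Fin n := ⟨Fin.castLE hmn, Fin.castLE_injective hmn⟩ with hemb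
    set W : Finset (Fin n) := Finset.univ.filter (fun v => m ≤ (v : ℕ)) with hW
    have hmlt : m < n := by omega
    have hWcard : W.card = r - k := by
      have hWI : W = Finset.Ici (⟨m, hmlt⟩ : Fin n) := by
        ext v
        simp [hW, Finset.mem_Ici, Fin.le_def]
      rw [hWI, Fin.card_Ici]
      simp only [Fin.val_mk]
      omega
    have hWdisj : ∀ (A : Finset (Fin m)), Disjoint (A.map emb) W := by
      intro A
      rw [Finset.disjoint_left]
      rintro v hv hvW
      simp only [Finset.mem_map, hemb, Function.Embedding.coeFn_mk] at hv
      obtain ⟨x, -, rfl⟩ := hv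
      simp only [hW, Finset.mem_filter] at hvW
      have : (x : ℕ) < m := x.isLt
      simp [Fin.castLE] at hvW
      omega
    set E' : Finset (Finset (Fin n)) := E.image (fun H => H.map emb ∪ W) with hE'
    have hE'card : ∀ H' ∈ E', H'.card = r := by
      intro H' hH'
      simp only [hE', Finset.mem_image] at hH'
      obtain ⟨H, hH, rfl⟩ := hH'
      rw [Finset.card_union_of_disjoint (hWdisj H), Finset.card_map, hEcard H hH, hWcard]
      omega
    -- restriction
    set res : Finset (Fin n) → Finset (Fin m) :=
      fun T => Finset.univ.filter (fun x => emb x ∈ T) with hres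
    have hres_map : ∀ S : Finset (Fin m), res (S.map emb) = S := by
      intro S
      ext x
      simp [hres, Finset.mem_map' emb]
    have hres_trans : ∀ T : Finset (Fin n), IsBoundedTransversal a E' T →
        IsBoundedTransversal a E (res T) := by
      intro T hT H hH
      have h1 : (H ∩ res T).map emb ⊆ (H.map emb ∪ W) ∩ T := by
        intro v hv
        simp only [Finset.mem_map] at hv
        obtain ⟨x, hx, rfl⟩ := hv
        simp only [Finset.mem_inter, hres, Finset.mem_filter, Finset.mem_univ, true_and] at hx
        exact Finset.mem_inter.mpr ⟨Finset.mem_union_left _ (Finset.mem_map_of_mem emb hx.1), hx.2⟩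
      calc (H ∩ res T).card = ((H ∩ res T).map emb).card := (Finset.card_map _).symm
        _ ≤ ((H.map emb ∪ W) ∩ T).card := Finset.card_le_card h1
        _ ≤ a := hT _ (Finset.mem_image_of_mem _ hH)
    have hmap_trans : ∀ S : Finset (Fin m), IsBoundedTransversal a E S →
        IsBoundedTransversal a E' (S.map emb) := by
      intro S hS H' hH'
      simp only [hE', Finset.mem_image] at hH'
      obtain ⟨H, hH, rfl⟩ := hH'
      have hdisj2 : W ∩ S.map emb = ∅ := by
        rw [Finset.inter_comm]
        exact Finset.disjoint_iff_inter_eq_empty.mp (hWdisj S)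
      have : (H.map emb ∪ W) ∩ S.map emb = (H ∩ S).map emb := by
        rw [Finset.union_inter_distrib_right, hdisj2, Finset.union_empty, ← Finset.map_inter]
      rw [this, Finset.card_map]
      exact hS H hH
    -- the injection
    have hchoice : ∀ S : Finset (Fin m), IsMaxBoundedTransversal a E S →
        ∃ T : Finset (Fin n), IsMaxBoundedTransversal a E' T ∧ res T = S := by
      intro S hS
      obtain ⟨T, hT, hST⟩ := exists_maximal_ext (S.map emb) (hmap_trans S hS.1)
      refine ⟨T, hT, ?_⟩
      have h1 : S ⊆ res T := by
        intro x hx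
        simp only [hres, Finset.mem_filter, Finset.mem_univ, true_and]
        exact hST (Finset.mem_map_of_mem emb hx)
      exact (hS.2 (res T) (hres_trans T hT.1) h1).symm
    choose f hf using hchoice
    have hcard : {S : Finset (Fin m) | IsMaxBoundedTransversal a E S}.ncard ≤
        {T : Finset (Fin n) | IsMaxBoundedTransversal a E' T}.ncard := by
      apply Set.ncard_le_ncard_of_injOn (fun S => if hS : IsMaxBoundedTransversal a E S then f S hS else ∅)
      · intro S hS
        simp only [Set.mem_setOf_eq] at hS ⊢
        rw [dif_pos hS]
        exact (hf S hS).1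
      · intro S₁ h₁ S₂ h₂ heq
        simp only [Set.mem_setOf_eq] at h₁ h₂
        dsimp only at heq
        rw [dif_pos h₁, dif_pos h₂] at heq
        have e1 := (hf S₁ h₁).2
        rw [heq, (hf S₂ h₂).2] at e1
        exact e1.symm
    calc {S : Finset (Fin m) | IsMaxBoundedTransversal a E S}.ncard
        ≤ {T : Finset (Fin n) | IsMaxBoundedTransversal a E' T}.ncard := hcard
      _ ≤ hTr r a n := le_csSup (hTr_bddAbove r a n) ⟨E', hE'card, rfl⟩
end
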